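/- Let B : ℝ³ → ℝ³ be a magnetic field of medium decay with |B(x)| ≤ C|x|^{−μ} for all sufficiently large |x|, where 3/2 < μ ≤ 2. Then the Coulomb gauge vector potential A(x) := −(1/(4π)) ∫_{ℝ³} ((x−y)/|x−y|³) × B(y) dy satisfies |A(x)| ≤ C′|x|^{−(μ−1)} for all sufficiently large |x|. -/

import Mathlib

open MeasureTheory Filter Topology
open scoped ENNReal

noncomputable section

abbrev E3 := EuclideanSpace ℝ (Fin 3)

/-- Euclidean dot product on `ℝ³`. -/
def dot3 (a b : E3) : ℝ := @inner ℝ _ _ a b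

/-- Cross product on `ℝ³`. -/
def cross3 (a b : E3) : E3 :=
  WithLp.toLp 2 ![a 1 * b 2 - a 2 * b 1, a 2 * b 0 - a 0 * b 2, a 0 * b 1 - a 1 * b 0]

/-- `∂ᵢ fₖ (x)` for a map `f : ℝ³ → ℝ³`. -/
def pderiv3 (f : E3 → E3) (i k : Fin 3) (x : E3) : ℝ :=
  fderiv ℝ f x (EuclideanSpace.single i 1) k

/-- Pointwise (classical) curl of a map `ℝ³ → ℝ³`. -/
def curl3 (f : E3 → E3) (x : E3) : E3 :=
  WithLp.toLp 2 ![pderiv3 f 1 2 x - pderiv3 f 2 1 x,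
    pderiv3 f 2 0 x - pderiv3 f 0 2 x,
    pderiv3 f 0 1 x - pderiv3 f 1 0 x]

/-- The longitudinal component of `A` decays integrably:
`∫₀^∞ sup { |A(x)·x|/|x| : |x| ≥ r } dr < ∞`. -/
def LongitudinalIntegrableDecay (A : E3 → E3) : Prop :=
  (∫⁻ r in Set.Ioi (0:ℝ),
    ⨆ x ∈ {x : E3 | r ≤ ‖x‖}, ENNReal.ofReal (|dot3 (A x) x| / ‖x‖)) < ⊤

/-- A vector potential of medium range. -/
def IsMediumRange (A : E3 → E3) : Prop :=
  Continuous A ∧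
  (∃ C > (0:ℝ), ∃ μ : ℝ, 1/2 < μ ∧ ∃ R : ℝ, ∀ x : E3, R ≤ ‖x‖ → ‖A x‖ ≤ C * ‖x‖ ^ (-μ)) ∧
  LongitudinalIntegrableDecay A

/-- `div B = 0` in the sense of tempered distributions. -/
def DivFreeS' (B : E3 → E3) : Prop :=
  ∀ φ : SchwartzMap E3 ℝ, ∫ x, fderiv ℝ (⇑φ) x (B x) = 0

/-- A magnetic field of medium decay on `ℝ³`. -/
def IsMediumDecay (B : E3 → E3) : Prop :=
  (∃ p : ℝ, 3 < p ∧ MemLp B (ENNReal.ofReal p) volume) ∧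
  (∃ C > (0:ℝ), ∃ μ : ℝ, 3/2 < μ ∧ ∃ R : ℝ, ∀ x : E3, R ≤ ‖x‖ → ‖B x‖ ≤ C * ‖x‖ ^ (-μ)) ∧
  DivFreeS' B

/-- `curl A = B` in the sense of tempered distributions. -/
def CurlEqS' (A B : E3 → E3) : Prop :=
  ∀ φ : SchwartzMap E3 E3, (∫ x, dot3 (A x) (curl3 (⇑φ) x)) = ∫ x, dot3 (B x) (φ x)

/-- The Coulomb gauge vector potential. -/
def coulombGauge (B : E3 → E3) : E3 → E3 :=
  fun x => (-(4 * Real.pi)⁻¹) • ∫ y : E3, cross3 ((‖x - y‖ ^ 3)⁻¹ • (x - y)) (B y)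

/-!
Since `‖k × b‖ ≤ ‖k‖ ‖b‖`, `‖A x‖ ≤ (4π)⁻¹ ∫ ‖x - y‖⁻² ‖B y‖ dy`. Split this integral at a radius
`R` beyond which `‖B y‖ ≤ C ‖y‖ ^ (-μ)`. On the ball `B` is integrable (it is in `Lᵖ` with
`p > 3 ≥ 1`), so for `‖x‖ ≥ 2R` this part is `O(‖x‖⁻²)`. Outside the ball the integral is at
most `C ∫ ‖x - y‖⁻² ‖y‖ ^ (-μ) dy`, a convolution of two Riesz kernels: it is finite because
`2 < 3`, `μ < 3` and `2 + μ > 3`, and by scaling it is homogeneous of degree `3 - 2 - μ = 1 - μ`,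
so it is `‖x‖ ^ (1 - μ)` times its values on the unit sphere, which are uniformly bounded.
-/

open Metric Set Module

theorem rpow_neg_mul_rpow_neg_le {u v a b : ℝ} (hu : 0 ≤ u) (hv : 0 ≤ v) (ha : 0 ≤ a)
    (hb : 0 ≤ b) (huv : 1 ≤ u + v) :
    u ^ (-a) * v ^ (-b) ≤ 2 ^ a * v ^ (-b) + 2 ^ b * u ^ (-a) := by
  have half_rpow_neg (c : ℝ) : (2⁻¹ : ℝ) ^ (-c) = 2 ^ c := by
    rw [Real.inv_rpow zero_le_two, Real.rpow_neg zero_le_two, inv_inv]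
  rcases le_total 2⁻¹ u with hu2 | hu2
  · have : u ^ (-a) ≤ 2 ^ a :=
      half_rpow_neg a ▸ Real.rpow_le_rpow_of_nonpos (by norm_num) hu2 (neg_nonpos.2 ha)
    nlinarith [Real.rpow_nonneg hv (-b), Real.rpow_nonneg hu (-a), Real.rpow_nonneg zero_le_two b]
  · have : v ^ (-b) ≤ 2 ^ b :=
      half_rpow_neg b ▸ Real.rpow_le_rpow_of_nonpos (by norm_num) (by linarith) (neg_nonpos.2 hb)
    nlinarith [Real.rpow_nonneg hv (-b), Real.rpow_nonneg hu (-a), Real.rpow_nonneg zero_le_two a]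

theorem div_two_rpow_neg {u : ℝ} (hu : 0 ≤ u) (a : ℝ) : (u / 2) ^ (-a) = 2 ^ a * u ^ (-a) := by
  rw [Real.div_rpow hu zero_le_two, Real.rpow_neg zero_le_two, div_inv_eq_mul, mul_comm]

section NormRpowConv

variable {E : Type*} [NormedAddCommGroup E] [NormedSpace ℝ E] [FiniteDimensional ℝ E]
  [MeasurableSpace E] [BorelSpace E] (μ : Measure E) [μ.IsAddHaarMeasure]

theorem lintegral_comp_smul_addHaar (f : E → ℝ≥0∞) {t : ℝ} (ht : t ≠ 0) :
    ∫⁻ y, f (t • y) ∂μ = ENNReal.ofReal |(t ^ finrank ℝ E)⁻¹| * ∫⁻ y, f y ∂μ := by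
  rw [← smul_eq_mul, ← lintegral_smul_measure, ← Measure.map_addHaar_smul μ ht]
  exact (lintegral_map_equiv f (Homeomorph.smulOfNeZero t ht).toMeasurableEquiv).symm

theorem setLIntegral_ball_norm_rpow_neg_lt_top [Nontrivial E] {b : ℝ} (hb : b < finrank ℝ E)
    (r : ℝ) : ∫⁻ y in ball 0 r, ENNReal.ofReal (‖y‖ ^ (-b)) ∂μ < ∞ :=
  Integrable.lintegral_lt_top <| integrableOn_ball_of_norm_le_rpow finrank_pos hb (C := 1)
    (.of_forall fun y => by simp [abs_of_nonneg (Real.rpow_nonneg (norm_nonneg y) _)])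
    (continuous_norm.measurable.pow_const _).aestronglyMeasurable

theorem setLIntegral_compl_ball_norm_rpow_neg_lt_top {c r : ℝ} (hc : finrank ℝ E < c)
    (hr : 0 < r) : ∫⁻ y in (ball 0 r)ᶜ, ENNReal.ofReal (‖y‖ ^ (-c)) ∂μ < ∞ := by
  have hc0 : 0 ≤ c := (Nat.cast_nonneg _).trans hc.le
  have hbound : ∀ y ∈ (ball (0 : E) r)ᶜ, ENNReal.ofReal (‖y‖ ^ (-c)) ≤
      ENNReal.ofReal ((1 + r⁻¹) ^ c) * ENNReal.ofReal ((1 + ‖y‖) ^ (-c)) := by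
    intro y hy
    have hry : r ≤ ‖y‖ := by simpa using hy
    have hy0 : 0 < ‖y‖ := hr.trans_le hry
    have hle : 1 + ‖y‖ ≤ (1 + r⁻¹) * ‖y‖ := by
      have : 1 ≤ r⁻¹ * ‖y‖ := by rwa [le_inv_mul_iff₀ hr, mul_one]
      linarith
    have h := Real.rpow_le_rpow_of_nonpos (by positivity) hle (neg_nonpos.2 hc0)
    rw [Real.mul_rpow (by positivity) hy0.le, Real.rpow_neg (by positivity) c,
      inv_mul_le_iff₀ (by positivity)] at h
    rw [← ENNReal.ofReal_mul (by positivity)]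
    exact ENNReal.ofReal_le_ofReal h
  calc ∫⁻ y in (ball 0 r)ᶜ, ENNReal.ofReal (‖y‖ ^ (-c)) ∂μ
      ≤ ∫⁻ y, ENNReal.ofReal ((1 + r⁻¹) ^ c) * ENNReal.ofReal ((1 + ‖y‖) ^ (-c)) ∂μ :=
        (setLIntegral_mono (by fun_prop) hbound).trans (setLIntegral_le_lintegral _ _)
    _ < ∞ := by
      rw [lintegral_const_mul' _ _ ENNReal.ofReal_ne_top]
      exact ENNReal.mul_lt_top ENNReal.ofReal_lt_top (finite_integral_one_add_norm hc)

theorem setLIntegral_ball_comp_sub_le (f : E → ℝ≥0∞) (x : E) (r : ℝ) :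
    ∫⁻ y in ball 0 r, f (x - y) ∂μ ≤ ∫⁻ y in ball 0 (r + ‖x‖), f y ∂μ := by
  calc ∫⁻ y in ball 0 r, f (x - y) ∂μ
      ≤ ∫⁻ y, (ball 0 (r + ‖x‖)).indicator f (x - y) ∂μ := by
        rw [← lintegral_indicator measurableSet_ball]
        refine lintegral_mono fun y => ?_
        by_cases hy : y ∈ ball 0 r
        · have hxy : x - y ∈ ball 0 (r + ‖x‖) := by
            rw [mem_ball_zero_iff] at hy ⊢
            linarith [norm_sub_le x y]
          simp [indicator_of_mem hy, indicator_of_mem hxy]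
        · simp [indicator_of_notMem hy]
    _ = ∫⁻ y in ball 0 (r + ‖x‖), f y ∂μ := by
      rw [lintegral_sub_left_eq_self, lintegral_indicator measurableSet_ball]

def normRpowConv (a b : ℝ) (x : E) : ℝ≥0∞ :=
  ∫⁻ y, ENNReal.ofReal (‖x - y‖ ^ (-a) * ‖y‖ ^ (-b)) ∂μ

theorem normRpowConv_smul (a b : ℝ) (x : E) {t : ℝ} (ht : 0 < t) :
    normRpowConv μ a b (t • x) =
      ENNReal.ofReal (t ^ ((finrank ℝ E : ℝ) - a - b)) * normRpowConv μ a b x := by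
  have hscale (y : E) : ‖t • x - t • y‖ ^ (-a) * ‖t • y‖ ^ (-b) =
      t ^ (-a - b) * (‖x - y‖ ^ (-a) * ‖y‖ ^ (-b)) := by
    rw [← smul_sub, norm_smul, norm_smul, Real.norm_of_nonneg ht.le,
      Real.mul_rpow ht.le (norm_nonneg _), Real.mul_rpow ht.le (norm_nonneg _),
      sub_eq_add_neg (-a) b, Real.rpow_add ht]
    ring
  have hcomp := lintegral_comp_smul_addHaar μ
    (fun y => ENNReal.ofReal (‖t • x - y‖ ^ (-a) * ‖y‖ ^ (-b))) ht.ne'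
  simp only [hscale, ENNReal.ofReal_mul (Real.rpow_nonneg ht.le _)] at hcomp
  rw [lintegral_const_mul' _ _ ENNReal.ofReal_ne_top] at hcomp
  have htd : 0 < t ^ finrank ℝ E := pow_pos ht _
  rw [abs_of_pos (inv_pos.2 htd)] at hcomp
  calc normRpowConv μ a b (t • x)
      = ENNReal.ofReal (t ^ finrank ℝ E) *
          (ENNReal.ofReal (t ^ finrank ℝ E)⁻¹ * normRpowConv μ a b (t • x)) := by
        rw [← mul_assoc, ← ENNReal.ofReal_mul htd.le, mul_inv_cancel₀ htd.ne', ENNReal.ofReal_one,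
          one_mul]
    _ = ENNReal.ofReal (t ^ ((finrank ℝ E : ℝ) - a - b)) * normRpowConv μ a b x := by
      rw [normRpowConv, ← hcomp, ← mul_assoc, ← ENNReal.ofReal_mul htd.le, sub_sub,
        sub_eq_add_neg _ (a + b), Real.rpow_add ht, Real.rpow_natCast, neg_add]
      rfl

theorem exists_normRpowConv_le_of_norm_eq_one [Nontrivial E] {a b : ℝ} (ha : 0 ≤ a)
    (hb : 0 ≤ b) (ha' : a < finrank ℝ E) (hb' : b < finrank ℝ E) (hab : finrank ℝ E < a + b) :
    ∃ M : ℝ≥0∞, M ≠ ∞ ∧ ∀ x : E, ‖x‖ = 1 → normRpowConv μ a b x ≤ M := by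
  have hball_b := setLIntegral_ball_norm_rpow_neg_lt_top μ hb' 2
  have hball_a := setLIntegral_ball_norm_rpow_neg_lt_top μ ha' 3
  have hcompl := setLIntegral_compl_ball_norm_rpow_neg_lt_top μ hab two_pos
  refine ⟨ENNReal.ofReal (2 ^ a) * ∫⁻ y in ball 0 2, ENNReal.ofReal (‖y‖ ^ (-b)) ∂μ +
      ENNReal.ofReal (2 ^ b) * ∫⁻ y in ball 0 3, ENNReal.ofReal (‖y‖ ^ (-a)) ∂μ +
      ENNReal.ofReal (2 ^ a) * ∫⁻ y in (ball 0 2)ᶜ, ENNReal.ofReal (‖y‖ ^ (-(a + b))) ∂μ,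
    by finiteness, fun x hx => ?_⟩
  have hnear : ∀ y ∈ ball (0 : E) 2, ENNReal.ofReal (‖x - y‖ ^ (-a) * ‖y‖ ^ (-b)) ≤
      ENNReal.ofReal (2 ^ a) * ENNReal.ofReal (‖y‖ ^ (-b)) +
      ENNReal.ofReal (2 ^ b) * ENNReal.ofReal (‖x - y‖ ^ (-a)) := by
    intro y _
    rw [← ENNReal.ofReal_mul (by positivity), ← ENNReal.ofReal_mul (by positivity),
      ← ENNReal.ofReal_add (by positivity) (by positivity)]
    refine ENNReal.ofReal_le_ofReal (rpow_neg_mul_rpow_neg_le (norm_nonneg _) (norm_nonneg _)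
      ha hb ?_)
    linarith [norm_sub_norm_le x y]
  have hfar : ∀ y ∈ (ball (0 : E) 2)ᶜ, ENNReal.ofReal (‖x - y‖ ^ (-a) * ‖y‖ ^ (-b)) ≤
      ENNReal.ofReal (2 ^ a) * ENNReal.ofReal (‖y‖ ^ (-(a + b))) := by
    intro y hy
    have hy2 : 2 ≤ ‖y‖ := by simpa using hy
    have hxy : ‖y‖ / 2 ≤ ‖x - y‖ := by linarith [norm_sub_norm_le y x, norm_sub_rev x y]
    have hker : ‖x - y‖ ^ (-a) ≤ 2 ^ a * ‖y‖ ^ (-a) :=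
      div_two_rpow_neg (norm_nonneg y) a ▸
        Real.rpow_le_rpow_of_nonpos (by linarith) hxy (neg_nonpos.2 ha)
    rw [← ENNReal.ofReal_mul (by positivity), neg_add, Real.rpow_add (by linarith), ← mul_assoc]
    exact ENNReal.ofReal_le_ofReal
      (mul_le_mul_of_nonneg_right hker (Real.rpow_nonneg (norm_nonneg y) _))
  have hshift : ∫⁻ y in ball 0 2, ENNReal.ofReal (‖x - y‖ ^ (-a)) ∂μ ≤
      ∫⁻ y in ball 0 3, ENNReal.ofReal (‖y‖ ^ (-a)) ∂μ := by
    have h := setLIntegral_ball_comp_sub_le μ (fun z => ENNReal.ofReal (‖z‖ ^ (-a))) x 2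
    rwa [hx, show (2 : ℝ) + 1 = 3 by norm_num] at h
  rw [normRpowConv, ← lintegral_add_compl _ measurableSet_ball]
  gcongr ?_ + ?_
  · calc _ ≤ ∫⁻ y in ball 0 2, ENNReal.ofReal (2 ^ a) * ENNReal.ofReal (‖y‖ ^ (-b)) +
            ENNReal.ofReal (2 ^ b) * ENNReal.ofReal (‖x - y‖ ^ (-a)) ∂μ :=
          setLIntegral_mono (by fun_prop) hnear
      _ = _ := by
        rw [lintegral_add_left (by fun_prop), lintegral_const_mul' _ _ ENNReal.ofReal_ne_top,
          lintegral_const_mul' _ _ ENNReal.ofReal_ne_top]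
      _ ≤ _ := by gcongr
  · calc _ ≤ ∫⁻ y in (ball 0 2)ᶜ,
            ENNReal.ofReal (2 ^ a) * ENNReal.ofReal (‖y‖ ^ (-(a + b))) ∂μ :=
          setLIntegral_mono (by fun_prop) hfar
      _ = _ := lintegral_const_mul' _ _ ENNReal.ofReal_ne_top

theorem exists_normRpowConv_le [Nontrivial E] {a b : ℝ} (ha : 0 ≤ a) (hb : 0 ≤ b)
    (ha' : a < finrank ℝ E) (hb' : b < finrank ℝ E) (hab : finrank ℝ E < a + b) :
    ∃ M : ℝ≥0∞, M ≠ ∞ ∧ ∀ x : E, x ≠ 0 →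
      normRpowConv μ a b x ≤ M * ENNReal.ofReal (‖x‖ ^ ((finrank ℝ E : ℝ) - a - b)) := by
  obtain ⟨M, hM, hsphere⟩ := exists_normRpowConv_le_of_norm_eq_one μ ha hb ha' hb' hab
  refine ⟨M, hM, fun x hx => ?_⟩
  have hx0 : 0 < ‖x‖ := norm_pos_iff.2 hx
  have hunit : ‖‖x‖⁻¹ • x‖ = 1 := by
    rw [norm_smul, norm_inv, norm_norm, inv_mul_cancel₀ hx0.ne']
  calc normRpowConv μ a b x = normRpowConv μ a b (‖x‖ • ‖x‖⁻¹ • x) := by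
        rw [smul_inv_smul₀ hx0.ne']
    _ = ENNReal.ofReal (‖x‖ ^ ((finrank ℝ E : ℝ) - a - b)) * normRpowConv μ a b (‖x‖⁻¹ • x) :=
        normRpowConv_smul μ a b _ hx0
    _ ≤ M * ENNReal.ofReal (‖x‖ ^ ((finrank ℝ E : ℝ) - a - b)) := by
      rw [mul_comm]
      gcongr
      exact hsphere _ hunit

theorem exists_lintegral_norm_sub_rpow_mul_enorm_le [Nontrivial E] {F : Type*}
    [NormedAddCommGroup F] {f : E → F} (hf : LocallyIntegrable f μ) {a b C R : ℝ} (ha : 0 ≤ a)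
    (hb : 0 ≤ b) (ha' : a < finrank ℝ E) (hb' : b < finrank ℝ E) (hab : finrank ℝ E < a + b)
    (hdecay : ∀ y : E, R ≤ ‖y‖ → ‖f y‖ ≤ C * ‖y‖ ^ (-b)) :
    ∃ C' : ℝ≥0∞, C' ≠ ∞ ∧ ∃ R₁ : ℝ, ∀ x : E, R₁ ≤ ‖x‖ →
      ∫⁻ y, ENNReal.ofReal (‖x - y‖ ^ (-a)) * ‖f y‖ₑ ∂μ ≤
        C' * ENNReal.ofReal (‖x‖ ^ ((finrank ℝ E : ℝ) - a - b)) := by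
  obtain ⟨M, hM, hconv⟩ := exists_normRpowConv_le μ ha hb ha' hb' hab
  have hK : ∫⁻ y in ball 0 R, ‖f y‖ₑ ∂μ < ∞ :=
    ((hf.integrableOn_isCompact (isCompact_closedBall 0 R)).mono_set ball_subset_closedBall).2
  refine ⟨ENNReal.ofReal (2 ^ a) * ∫⁻ y in ball 0 R, ‖f y‖ₑ ∂μ + ENNReal.ofReal C * M,
    by finiteness, max (2 * R) 1, fun x hx => ?_⟩
  set e : ℝ := (finrank ℝ E : ℝ) - a - b
  have hx1 : 1 ≤ ‖x‖ := le_of_max_le_right hx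
  have hx0 : x ≠ 0 := norm_pos_iff.1 (by linarith)
  have hnear : ∀ y ∈ ball (0 : E) R, ENNReal.ofReal (‖x - y‖ ^ (-a)) * ‖f y‖ₑ ≤
      ENNReal.ofReal (2 ^ a) * ENNReal.ofReal (‖x‖ ^ e) * ‖f y‖ₑ := by
    intro y hy
    have hxy : ‖x‖ / 2 ≤ ‖x - y‖ := by
      linarith [norm_sub_norm_le x y, mem_ball_zero_iff.1 hy, le_of_max_le_left hx]
    have hker : ‖x - y‖ ^ (-a) ≤ 2 ^ a * ‖x‖ ^ e := by
      calc ‖x - y‖ ^ (-a) ≤ (‖x‖ / 2) ^ (-a) :=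
            Real.rpow_le_rpow_of_nonpos (by linarith) hxy (neg_nonpos.2 ha)
        _ = 2 ^ a * ‖x‖ ^ (-a) := div_two_rpow_neg (norm_nonneg x) a
        _ ≤ 2 ^ a * ‖x‖ ^ e := by
          gcongr
          simp only [e]
          linarith
    rw [← ENNReal.ofReal_mul (by positivity)]
    gcongr
  have hfar : ∀ y ∈ (ball (0 : E) R)ᶜ, ENNReal.ofReal (‖x - y‖ ^ (-a)) * ‖f y‖ₑ ≤
      ENNReal.ofReal C * ENNReal.ofReal (‖x - y‖ ^ (-a) * ‖y‖ ^ (-b)) := by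
    intro y hy
    have hfy : ‖f y‖ₑ ≤ ENNReal.ofReal C * ENNReal.ofReal (‖y‖ ^ (-b)) := by
      rw [← ofReal_norm, ← ENNReal.ofReal_mul' (by positivity)]
      exact ENNReal.ofReal_le_ofReal (hdecay y (by simpa using hy))
    rw [ENNReal.ofReal_mul (by positivity)]
    calc _ ≤ ENNReal.ofReal (‖x - y‖ ^ (-a)) *
          (ENNReal.ofReal C * ENNReal.ofReal (‖y‖ ^ (-b))) := by gcongr
      _ = _ := by ring
  rw [← lintegral_add_compl _ measurableSet_ball, add_mul]
  gcongr ?_ + ?_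
  · calc _ ≤ ∫⁻ y in ball 0 R, ENNReal.ofReal (2 ^ a) * ENNReal.ofReal (‖x‖ ^ e) * ‖f y‖ₑ ∂μ :=
          setLIntegral_mono' measurableSet_ball hnear
      _ = _ := by
        rw [lintegral_const_mul' _ _ (by finiteness)]
        ring
  · calc _ ≤ ∫⁻ y in (ball 0 R)ᶜ,
            ENNReal.ofReal C * ENNReal.ofReal (‖x - y‖ ^ (-a) * ‖y‖ ^ (-b)) ∂μ :=
          setLIntegral_mono (by fun_prop) hfar
      _ ≤ ENNReal.ofReal C * normRpowConv μ a b x := by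
        rw [lintegral_const_mul' _ _ ENNReal.ofReal_ne_top]
        gcongr
        exact setLIntegral_le_lintegral _ _
      _ ≤ _ := by
        rw [mul_assoc]
        gcongr
        exact hconv x hx0

end NormRpowConv

theorem norm_cross3_le (a b : E3) : ‖cross3 a b‖ ≤ ‖a‖ * ‖b‖ := by
  have lagrange : ‖cross3 a b‖ ^ 2 + (a 0 * b 0 + a 1 * b 1 + a 2 * b 2) ^ 2 =
      (‖a‖ * ‖b‖) ^ 2 := by
    simp only [mul_pow, EuclideanSpace.norm_sq_eq, Fin.sum_univ_three, Real.norm_eq_abs, sq_abs]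
    simp only [cross3, PiLp.toLp_apply, Matrix.cons_val_zero, Matrix.cons_val_one,
      Matrix.cons_val_two, Matrix.head_cons, Matrix.tail_cons]
    ring
  exact (sq_le_sq₀ (norm_nonneg _) (by positivity)).1 (by nlinarith)

theorem norm_inv_norm_pow_three_smul {V : Type*} [NormedAddCommGroup V] [NormedSpace ℝ V]
    (v : V) : ‖(‖v‖ ^ 3)⁻¹ • v‖ = ‖v‖ ^ (-2 : ℝ) := by
  rcases eq_or_ne v 0 with rfl | hv
  · simp
  · have hv0 : 0 < ‖v‖ := norm_pos_iff.2 hv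
    rw [norm_smul, norm_inv, norm_pow, norm_norm, Real.rpow_neg hv0.le, Real.rpow_two]
    field_simp

theorem enorm_coulombGauge_le (B : E3 → E3) (x : E3) :
    ‖coulombGauge B x‖ₑ ≤
      ENNReal.ofReal (4 * Real.pi)⁻¹ * ∫⁻ y, ENNReal.ofReal (‖x - y‖ ^ (-2 : ℝ)) * ‖B y‖ₑ := by
  rw [coulombGauge, enorm_smul, enorm_neg, Real.enorm_eq_ofReal (by positivity)]
  gcongr
  refine (enorm_integral_le_lintegral_enorm _).trans (lintegral_mono fun y => ?_)
  rw [← ofReal_norm, ← ofReal_norm, ← ENNReal.ofReal_mul (by positivity),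
    ← norm_inv_norm_pow_three_smul]
  exact ENNReal.ofReal_le_ofReal (norm_cross3_le _ _)

/-- Decay of the Coulomb gauge for `3/2 < μ ≤ 2` (Proposition PC.3). -/
theorem statement9 (B : E3 → E3) (C μ R₀ : ℝ) (hμ : 3/2 < μ) (hμ2 : μ ≤ 2)
    (hBmd : IsMediumDecay B)
    (hbd : ∀ x : E3, R₀ ≤ ‖x‖ → ‖B x‖ ≤ C * ‖x‖ ^ (-μ)) :
    ∃ C' : ℝ, ∃ R₁ : ℝ, ∀ x : E3, R₁ ≤ ‖x‖ →
      ‖coulombGauge B x‖ ≤ C' * ‖x‖ ^ (-(μ - 1)) := by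
  obtain ⟨⟨p, hp, hBp⟩, -, -⟩ := hBmd
  have hB : LocallyIntegrable B volume :=
    hBp.locallyIntegrable (ENNReal.one_le_ofReal.2 (by linarith))
  have hdim : (finrank ℝ E3 : ℝ) = 3 := by simp
  obtain ⟨C', hC', R₁, hdecay⟩ := exists_lintegral_norm_sub_rpow_mul_enorm_le volume hB
    (a := 2) zero_le_two (by linarith) (by rw [hdim]; norm_num) (by rw [hdim]; linarith)
    (by rw [hdim]; linarith) hbd
  refine ⟨(4 * Real.pi)⁻¹ * C'.toReal, R₁, fun x hx => ?_⟩
  have h := (enorm_coulombGauge_le B x).trans (mul_le_mul_right (hdecay x hx) _)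
  rw [hdim, show (3 : ℝ) - 2 - μ = -(μ - 1) by ring] at h
  rw [← toReal_enorm]
  refine (ENNReal.toReal_mono (by finiteness) h).trans_eq ?_
  rw [ENNReal.toReal_mul, ENNReal.toReal_mul, ENNReal.toReal_ofReal (by positivity),
    ENNReal.toReal_ofReal (by positivity), mul_assoc]
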